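/- For a deterministic program M : H → O with H finite of size n and uniform inputs, if M has at most k distinct outputs then GE[U](M) ≤ (n/2)·(1 − 1/k); in particular GE[U](M) ≤ q implies a bound relating the number of distinct outputs to q, namely any program with more than ⌊(⌊q⌋+1)²/(⌊q⌋+1−q)⌋ outputs that partition the inputs suitably can exceed flow q. -/
import Mathlib


open Finset Real

variable {H O : Type*} [Fintype H] [Nonempty H] [DecidableEq O]

/-- The set of inputs mapped to output `o` (the preimage `M⁻¹(o)`). -/
def fiber (M : H → O) (o : O) : Finset H := Finset.univ.filter (fun h => M h = o)

/-- The set of outputs of `M` (the image/range of `M`). -/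
def outputs (M : H → O) : Finset O := Finset.univ.image M

/-- Guessing-entropy based QIF under the uniform distribution:
`GE[U](M) = (n+1)/2 − (1/(2n))·Σ_o (|M⁻¹(o)|² + |M⁻¹(o)|)`. -/
noncomputable def GE (M : H → O) : ℝ :=
  ((Fintype.card H : ℝ) + 1) / 2 -
    1 / (2 * (Fintype.card H : ℝ)) *
      ∑ o ∈ outputs M, (((fiber M o).card : ℝ) ^ 2 + ((fiber M o).card : ℝ))

theorem GE_le_of_card_outputs (M : H → O) (k : ℕ) (hk : (outputs M).card = k) :
    GE M ≤ ((Fintype.card H : ℝ) / 2) * (1 - 1 / (k : ℝ)) := by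
  have hn : 0 < (Fintype.card H : ℝ) := by exact_mod_cast Fintype.card_pos
  have hkpos : 0 < k := by
    rw [← hk, Finset.card_pos, outputs]
    exact Finset.univ_nonempty.image M
  have hkr : 0 < (k : ℝ) := by exact_mod_cast hkpos
  have hsum : ∑ o ∈ outputs M, ((fiber M o).card : ℝ) = (Fintype.card H : ℝ) := by
    have h := Finset.card_eq_sum_card_fiberwise (f := M) (s := (Finset.univ : Finset H))
      (t := outputs M) (fun x _ => Finset.mem_image_of_mem M (Finset.mem_univ x))
    rw [Finset.card_univ] at h
    rw [h]
    push_cast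
    rfl
  have hCS : (Fintype.card H : ℝ) ^ 2 ≤ (k : ℝ) * ∑ o ∈ outputs M, ((fiber M o).card : ℝ) ^ 2 := by
    have h := sq_sum_le_card_mul_sum_sq (s := outputs M)
      (f := fun o => ((fiber M o).card : ℝ))
    rw [hsum, hk] at h
    exact h
  rw [GE, Finset.sum_add_distrib, hsum]
  set n := (Fintype.card H : ℝ) with hn'
  set S := ∑ o ∈ outputs M, ((fiber M o).card : ℝ) ^ 2 with hS
  have hfib : n ^ 2 / (k : ℝ) + n ≤ S + n := by
    have : n ^ 2 / (k : ℝ) ≤ S := by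
      rw [div_le_iff₀ hkr]
      linarith [hCS]
    linarith
  have hstep : (n + 1) / 2 - 1 / (2 * n) * (S + n) ≤
      (n + 1) / 2 - 1 / (2 * n) * (n ^ 2 / (k : ℝ) + n) := by
    have hpos : 0 < 1 / (2 * n) := by positivity
    nlinarith [mul_le_mul_of_nonneg_left hfib hpos.le]
  refine hstep.trans (le_of_eq ?_)
  field_simp
  ring
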